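/- Let f = x^2+y^2+z^2+w^2 and g = xzw + (z+w)y^2 + x^3 + x^2y + xy^2 + y^3 in C[x,y,z,w]. Then g does not belong to the ideal I(f,g) = (f) + m_2(f,g), although g belongs to the radical of I(f,g); in particular I(f,g) ≠ J(f,g) = (f)+(g)+m_2(f,g). -/

import Mathlib

/-!
Modulo the monomial ideal `(x², y, z², w²)` the polynomial `f` and all the Jacobian minors vanish,
while `g ≡ xzw` does not, so `g ∉ I(f,g)`.

Conversely, Euler's identity for the homogeneous `f` and `g` gives
`∑ₖ Xₖ (∂ₖf ∂ⱼg - ∂ⱼf ∂ₖg) = 2 f ∂ⱼg - 3 g ∂ⱼf`, hence `Xⱼ g ∈ I(f,g)` because `∂ⱼf = 2Xⱼ`;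
Euler's identity for `g` once more gives `3 g² = ∑ⱼ ∂ⱼg · Xⱼ g ∈ I(f,g)`.
-/

namespace MvPolynomial

section JacobianMinors

variable {σ R : Type*} [CommRing R]

noncomputable def jacobianMinorsIdeal (f g : MvPolynomial σ R) : Ideal (MvPolynomial σ R) :=
  Ideal.span (Set.range fun ij : σ × σ =>
    pderiv ij.1 f * pderiv ij.2 g - pderiv ij.2 f * pderiv ij.1 g)

theorem jacobianMinor_mem_jacobianMinorsIdeal (f g : MvPolynomial σ R) (i j : σ) :
    pderiv i f * pderiv j g - pderiv j f * pderiv i g ∈ jacobianMinorsIdeal f g :=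
  Ideal.subset_span ⟨(i, j), rfl⟩

theorem jacobianMinorsIdeal_le_iff {f g : MvPolynomial σ R} {J : Ideal (MvPolynomial σ R)} :
    jacobianMinorsIdeal f g ≤ J ↔
      ∀ i j, pderiv i f * pderiv j g - pderiv j f * pderiv i g ∈ J := by
  rw [jacobianMinorsIdeal, Ideal.span_le, Set.range_subset_iff, Prod.forall]
  rfl

variable [Fintype σ]

theorem IsHomogeneous.sum_X_mul_jacobianMinor {f g : MvPolynomial σ R} {p q : ℕ}
    (hf : f.IsHomogeneous p) (hg : g.IsHomogeneous q) (j : σ) :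
    ∑ k, X k * (pderiv k f * pderiv j g - pderiv j f * pderiv k g) =
      p • f * pderiv j g - q • g * pderiv j f := by
  rw [← hf.sum_X_mul_pderiv, ← hg.sum_X_mul_pderiv, Finset.sum_mul, Finset.sum_mul,
    ← Finset.sum_sub_distrib]
  exact Finset.sum_congr rfl fun k _ => by ring

theorem IsHomogeneous.nsmul_mul_pderiv_mem {f g : MvPolynomial σ R} {p q : ℕ}
    (hf : f.IsHomogeneous p) (hg : g.IsHomogeneous q) (j : σ) :
    q • g * pderiv j f ∈ Ideal.span {f} ⊔ jacobianMinorsIdeal f g := by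
  have euler : q • g * pderiv j f = p • f * pderiv j g -
      ∑ k, X k * (pderiv k f * pderiv j g - pderiv j f * pderiv k g) := by
    rw [hf.sum_X_mul_jacobianMinor hg j, sub_sub_cancel]
  rw [euler]
  refine sub_mem (Ideal.mem_sup_left ?_) (Ideal.mem_sup_right ?_)
  · rw [nsmul_eq_mul, mul_right_comm]
    exact Ideal.mul_mem_left _ _ (Ideal.mem_span_singleton_self f)
  · exact sum_mem fun k _ => Ideal.mul_mem_left _ _ (jacobianMinor_mem_jacobianMinorsIdeal f g k j)

end JacobianMinors

section SumOfSquares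

variable {σ : Type*} [Fintype σ]

theorem pderiv_sum_X_sq {R : Type*} [CommRing R] (j : σ) :
    pderiv j (∑ i, X i ^ 2 : MvPolynomial σ R) = 2 * X j := by
  classical
  simp [pderiv_X, Pi.single_apply]

theorem isHomogeneous_sum_X_sq {R : Type*} [CommRing R] :
    (∑ i, X i ^ 2 : MvPolynomial σ R).IsHomogeneous 2 :=
  IsHomogeneous.sum _ _ _ fun i _ => isHomogeneous_X_pow i 2

variable {K : Type*} [Field K] [CharZero K] {g : MvPolynomial σ K} {q : ℕ}

theorem X_mul_mem_span_sum_X_sq_sup_jacobianMinorsIdeal (hg : g.IsHomogeneous q) (hq : q ≠ 0)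
    (j : σ) : X j * g ∈ Ideal.span {∑ i, X i ^ 2} ⊔ jacobianMinorsIdeal (∑ i, X i ^ 2) g := by
  have h := isHomogeneous_sum_X_sq.nsmul_mul_pderiv_mem hg j
  rw [pderiv_sum_X_sq] at h
  have : X j * g = C (2 * q : K)⁻¹ * (q • g * (2 * X j)) := by
    have h2q : (2 * q : K) ≠ 0 := mul_ne_zero two_ne_zero (Nat.cast_ne_zero.mpr hq)
    calc X j * g = C ((2 * q : K)⁻¹ * (2 * q)) * (X j * g) := by
          rw [inv_mul_cancel₀ h2q, C_1, one_mul]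
      _ = C (2 * q : K)⁻¹ * (q • g * (2 * X j)) := by
          simp only [map_mul, map_natCast, map_ofNat, nsmul_eq_mul]
          ring
  rw [this]
  exact Ideal.mul_mem_left _ _ h

theorem sq_mem_span_sum_X_sq_sup_jacobianMinorsIdeal (hg : g.IsHomogeneous q) (hq : q ≠ 0) :
    g ^ 2 ∈ Ideal.span {∑ i, X i ^ 2} ⊔ jacobianMinorsIdeal (∑ i, X i ^ 2) g := by
  have : g ^ 2 = C (q : K)⁻¹ * ∑ j, pderiv j g * (X j * g) := by
    have euler : ∑ j, pderiv j g * (X j * g) = C (q : K) * g ^ 2 := by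
      simp_rw [← mul_assoc, mul_comm (pderiv _ g), ← Finset.sum_mul, hg.sum_X_mul_pderiv,
        nsmul_eq_mul, map_natCast]
      ring
    rw [euler, ← mul_assoc, ← C_mul, inv_mul_cancel₀ (Nat.cast_ne_zero.mpr hq), C_1, one_mul]
  rw [this]
  exact Ideal.mul_mem_left _ _ (sum_mem fun j _ => Ideal.mul_mem_left _ _
    (X_mul_mem_span_sum_X_sq_sup_jacobianMinorsIdeal hg hq j))

end SumOfSquares

end MvPolynomial

open MvPolynomial

section Example

variable {R : Type*} [CommRing R]

noncomputable def cubic : MvPolynomial (Fin 4) R :=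
  X 0 * X 2 * X 3 + (X 2 + X 3) * X 1 ^ 2 + X 0 ^ 3 + X 0 ^ 2 * X 1 + X 0 * X 1 ^ 2 + X 1 ^ 3

theorem isHomogeneous_cubic : (cubic : MvPolynomial (Fin 4) R).IsHomogeneous 3 := by
  have hX := isHomogeneous_X R (σ := Fin 4)
  have hXpow := isHomogeneous_X_pow (R := R) (σ := Fin 4)
  exact (((((((hX 0).mul (hX 2)).mul (hX 3)).add (((hX 2).add (hX 3)).mul (hXpow 1 2))).add
    (hXpow 0 3)).add ((hXpow 0 2).mul (hX 1))).add ((hX 0).mul (hXpow 1 2))).add (hXpow 1 3)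

/-- The monomial ideal `(x², y, z², w²)`, spanned by the monomials that do not divide `xzw`. -/
noncomputable def nonDivisorsIdeal : Ideal (MvPolynomial (Fin 4) R) :=
  Ideal.span {X 0 ^ 2, X 1, X 2 ^ 2, X 3 ^ 2}

theorem X_one_mem_nonDivisorsIdeal : (X 1 : MvPolynomial (Fin 4) R) ∈ nonDivisorsIdeal :=
  Ideal.subset_span (by simp)

theorem X_sq_mem_nonDivisorsIdeal (i : Fin 4) :
    (X i ^ 2 : MvPolynomial (Fin 4) R) ∈ nonDivisorsIdeal := by
  fin_cases i
  · exact Ideal.subset_span (by simp)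
  · exact Ideal.pow_mem_of_mem _ X_one_mem_nonDivisorsIdeal 2 two_pos
  · exact Ideal.subset_span (by simp)
  · exact Ideal.subset_span (by simp)

theorem X_mul_X_mul_X_notMem_nonDivisorsIdeal [Nontrivial R] :
    (X 0 * X 2 * X 3 : MvPolynomial (Fin 4) R) ∉ nonDivisorsIdeal := by
  have : (nonDivisorsIdeal : Ideal (MvPolynomial (Fin 4) R)) = Ideal.span ((monomial · 1) ''
      {Finsupp.single 0 2, Finsupp.single 1 1, Finsupp.single 2 2, Finsupp.single 3 2}) := by
    simp only [nonDivisorsIdeal, X_pow_eq_monomial, Set.image_insert_eq, Set.image_singleton]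
    rfl
  rw [this, mem_ideal_span_monomial_image]
  simp [X, monomial_mul]

theorem cubic_sub_mem_nonDivisorsIdeal :
    (cubic - X 0 * X 2 * X 3 : MvPolynomial (Fin 4) R) ∈ nonDivisorsIdeal := by
  rw [← Ideal.Quotient.eq_zero_iff_mem]
  have hx : Ideal.Quotient.mk nonDivisorsIdeal (X 0 : MvPolynomial (Fin 4) R) ^ 2 = 0 := by
    rw [← map_pow, Ideal.Quotient.eq_zero_iff_mem]; exact X_sq_mem_nonDivisorsIdeal 0
  have hy := Ideal.Quotient.eq_zero_iff_mem.mpr (X_one_mem_nonDivisorsIdeal (R := R))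
  simp [cubic, hy]
  rw [pow_succ, hx, zero_mul]

theorem jacobianMinorsIdeal_le_nonDivisorsIdeal :
    jacobianMinorsIdeal (∑ i, X i ^ 2) (cubic : MvPolynomial (Fin 4) R) ≤ nonDivisorsIdeal := by
  rw [jacobianMinorsIdeal_le_iff]
  intro i j
  rw [pderiv_sum_X_sq, pderiv_sum_X_sq, ← Ideal.Quotient.eq_zero_iff_mem]
  set π := Ideal.Quotient.mk (nonDivisorsIdeal : Ideal (MvPolynomial (Fin 4) R))
  have hsq (k : Fin 4) : π (X k) ^ 2 = 0 := by
    rw [← map_pow, Ideal.Quotient.eq_zero_iff_mem]; exact X_sq_mem_nonDivisorsIdeal k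
  have hy : π (X 1) = 0 := Ideal.Quotient.eq_zero_iff_mem.mpr X_one_mem_nonDivisorsIdeal
  have hx := hsq 0
  have hz := hsq 2
  have hw := hsq 3
  have hgrad (k : Fin 4) : π (pderiv k cubic) =
      ![π (X 2) * π (X 3), 0, π (X 0) * π (X 3), π (X 0) * π (X 2)] k := by
    fin_cases k <;> simp [cubic, pderiv_X, hy] <;> grind
  -- Modulo the ideal, `Xᵢ ∂ⱼg` is `xzw` when `i = j ≠ 1` and `0` otherwise.
  suffices π (X i) * π (pderiv j cubic) = π (X j) * π (pderiv i cubic) by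
    simp only [map_sub, map_mul, map_ofNat]
    linear_combination 2 * this
  rw [hgrad, hgrad]
  fin_cases i <;> fin_cases j <;> simp [hy] <;> grind

theorem cubic_notMem_span_sum_X_sq_sup_jacobianMinorsIdeal [Nontrivial R] :
    (cubic : MvPolynomial (Fin 4) R) ∉
      Ideal.span {∑ i, X i ^ 2} ⊔ jacobianMinorsIdeal (∑ i, X i ^ 2) cubic := by
  intro h
  have hle : Ideal.span {∑ i, X i ^ 2} ⊔ jacobianMinorsIdeal (∑ i, X i ^ 2) cubic ≤
      (nonDivisorsIdeal : Ideal (MvPolynomial (Fin 4) R)) :=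
    sup_le (Ideal.span_le.mpr (Set.singleton_subset_iff.mpr
      (sum_mem fun i _ => X_sq_mem_nonDivisorsIdeal i))) jacobianMinorsIdeal_le_nonDivisorsIdeal
  apply X_mul_X_mul_X_notMem_nonDivisorsIdeal (R := R)
  simpa using sub_mem (hle h) cubic_sub_mem_nonDivisorsIdeal

end Example

/-- For `f = x²+y²+z²+w²` and `g = xzw + (z+w)y² + x³ + x²y + xy² + y³`,
`g ∉ I(f,g)` although `g ∈ √I(f,g)`; in particular `I(f,g) ≠ J(f,g)`. -/
theorem stmt_19 (f g : MvPolynomial (Fin 4) ℂ)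
    (hf : f = X 0 ^ 2 + X 1 ^ 2 + X 2 ^ 2 + X 3 ^ 2)
    (hg : g = X 0 * X 2 * X 3 + (X 2 + X 3) * X 1 ^ 2 + X 0 ^ 3 + X 0 ^ 2 * X 1
      + X 0 * X 1 ^ 2 + X 1 ^ 3)
    (m2 : Ideal (MvPolynomial (Fin 4) ℂ))
    (hm2 : m2 = Ideal.span (Set.range fun ij : Fin 4 × Fin 4 =>
      pderiv ij.1 f * pderiv ij.2 g - pderiv ij.2 f * pderiv ij.1 g)) :
    g ∉ Ideal.span {f} ⊔ m2 ∧ g ∈ (Ideal.span {f} ⊔ m2).radical ∧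
      Ideal.span {f} ⊔ m2 ≠ Ideal.span {f, g} ⊔ m2 := by
  obtain rfl : f = ∑ i, X i ^ 2 := by rw [hf, Fin.sum_univ_four]
  obtain rfl : g = cubic := hg
  obtain rfl : m2 = jacobianMinorsIdeal (∑ i, X i ^ 2) cubic := hm2
  have hnot := cubic_notMem_span_sum_X_sq_sup_jacobianMinorsIdeal (R := ℂ)
  refine ⟨hnot, ⟨2, sq_mem_span_sum_X_sq_sup_jacobianMinorsIdeal isHomogeneous_cubic three_ne_zero⟩,
    fun h => hnot ?_⟩
  rw [h]
  exact Ideal.mem_sup_left (Ideal.subset_span (by simp))
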